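/- Let a > 0. Then for every ω ∈ ℝ, the Fourier transform of x ↦ sign(x)·e^{−ax²/2} satisfies ∫_ℝ sign(x)·e^{−ax²/2}·e^{−2πiωx} dx = −2i·√(2/a)·D(√2·πω/√a), where D is the Dawson function D(z) = e^{−z²}·∫₀^z e^{t²} dt; equivalently, the transform equals −2i·√(2/a)·e^{−2π²ω²/a}·∫₀^{√2πω/√a} e^{t²} dt. -/

import Mathlib

open MeasureTheory Real

/-- The Dawson function `D(z) = e^{-z²} ∫₀^z e^{t²} dt`. -/
noncomputable def dawson (z : ℝ) : ℝ :=
  Real.exp (-z ^ 2) * ∫ t in (0:ℝ)..z, Real.exp (t ^ 2)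

open Set Filter

/-! The transform of an odd real function is `-2i` times its sine transform over `(0, ∞)`.
The substitution `u = √(a/2) x` turns that into `H(b) = ∫₀^∞ e^{-x²} sin(2bx) dx`, and
differentiating under the integral sign and integrating by parts gives `H' = 1 - 2bH`,
`H(0) = 0`: the initial value problem solved by Dawson's function, since it forces
`(H e^{b²})' = e^{b²}`. -/

theorem eq_dawson_of_hasDerivAt {f : ℝ → ℝ} (hf : ∀ x, HasDerivAt f (1 - 2 * x * f x) x)
    (h0 : f 0 = 0) (z : ℝ) : f z = dawson z := by
  have hderiv : ∀ x, HasDerivAt (fun x => f x * exp (x ^ 2)) (exp (x ^ 2)) x := fun x => by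
    refine ((hf x).fun_mul ((hasDerivAt_pow 2 x).exp)).congr_deriv ?_
    push_cast
    ring
  have hint := intervalIntegral.integral_eq_sub_of_hasDerivAt (fun x _ => hderiv x)
    ((continuous_exp.comp (continuous_pow 2)).intervalIntegrable 0 z)
  rw [h0, zero_mul, sub_zero] at hint
  rw [dawson, hint, ← mul_assoc, mul_comm, ← mul_assoc, ← exp_add, add_neg_cancel, exp_zero,
    one_mul]

theorem integrable_two_mul_mul_exp_neg_sq : Integrable fun x : ℝ => 2 * x * exp (-x ^ 2) := by
  simpa [mul_assoc] using (integrable_mul_exp_neg_mul_sq one_pos).const_mul 2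

section GaussianSine

variable (b : ℝ)

theorem integrable_exp_neg_sq_mul_sin : Integrable fun x => exp (-x ^ 2) * sin (2 * b * x) :=
  (by simpa using integrable_exp_neg_mul_sq one_pos : Integrable fun x : ℝ => exp (-x ^ 2))
    |>.mul_bdd (by fun_prop) (c := 1) (ae_of_all _ fun x => by simpa using abs_sin_le_one _)

theorem integrable_mul_exp_neg_sq_mul_cos :
    Integrable fun x => 2 * x * exp (-x ^ 2) * cos (2 * b * x) :=
  integrable_two_mul_mul_exp_neg_sq.mul_bdd (by fun_prop) (c := 1)
    (ae_of_all _ fun x => by simpa using abs_cos_le_one _)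

theorem integral_Ioi_mul_exp_neg_sq_mul_cos :
    ∫ x in Ioi 0, 2 * x * exp (-x ^ 2) * cos (2 * b * x)
      = 1 - 2 * b * ∫ x in Ioi 0, exp (-x ^ 2) * sin (2 * b * x) := by
  have hderiv : ∀ x ∈ Ici (0 : ℝ), HasDerivAt (fun x => -(exp (-x ^ 2) * cos (2 * b * x)))
      (2 * x * exp (-x ^ 2) * cos (2 * b * x) + 2 * b * (exp (-x ^ 2) * sin (2 * b * x))) x :=
    fun x _ => by
      refine ((hasDerivAt_pow 2 x).fun_neg.exp.fun_mul
        ((hasDerivAt_id x).const_mul (2 * b)).cos).fun_neg.congr_deriv ?_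
      simp only [id, Nat.cast_ofNat]
      ring
  have hlim : Tendsto (fun x => -(exp (-x ^ 2) * cos (2 * b * x))) atTop (nhds 0) := by
    refine squeeze_zero_norm (fun x => ?_) ((tendsto_exp_atBot.comp
      (tendsto_neg_atTop_atBot.comp (tendsto_pow_atTop two_ne_zero))))
    rw [norm_neg, norm_mul, norm_of_nonneg (exp_pos _).le]
    exact mul_le_of_le_one_right (exp_pos _).le (by simpa using abs_cos_le_one _)
  have hint := (integrable_mul_exp_neg_sq_mul_cos b).integrableOn (s := Ioi 0)
  have hint' := ((integrable_exp_neg_sq_mul_sin b).const_mul (2 * b)).integrableOn (s := Ioi 0)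
  have h := integral_Ioi_of_hasDerivAt_of_tendsto' hderiv (hint.add hint') hlim
  rw [integral_add hint hint', integral_const_mul] at h
  simp only [ne_eq, OfNat.ofNat_ne_zero, not_false_eq_true, zero_pow, neg_zero, exp_zero, mul_zero,
    cos_zero, mul_one, sub_neg_eq_add, zero_add] at h
  linarith

theorem hasDerivAt_integral_Ioi_exp_neg_sq_mul_sin :
    HasDerivAt (fun b => ∫ x in Ioi 0, exp (-x ^ 2) * sin (2 * b * x))
      (1 - 2 * b * ∫ x in Ioi 0, exp (-x ^ 2) * sin (2 * b * x)) b := by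
  rw [← integral_Ioi_mul_exp_neg_sq_mul_cos]
  refine (hasDerivAt_integral_of_dominated_loc_of_deriv_le (μ := volume.restrict (Ioi 0))
    (F := fun b x => exp (-x ^ 2) * sin (2 * b * x))
    (F' := fun b x => 2 * x * exp (-x ^ 2) * cos (2 * b * x)) (Metric.ball_mem_nhds b one_pos)
    (Eventually.of_forall fun _ => by fun_prop) (integrable_exp_neg_sq_mul_sin b).integrableOn
    (by fun_prop) (bound := fun x => ‖2 * x * exp (-x ^ 2)‖) ?_
    integrable_two_mul_mul_exp_neg_sq.norm.integrableOn ?_).2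
  · refine ae_of_all _ fun x b' _ => ?_
    rw [norm_mul]
    exact mul_le_of_le_one_right (norm_nonneg _) (by simpa using abs_cos_le_one _)
  · refine ae_of_all _ fun x b' _ => ?_
    refine ((((hasDerivAt_id b').const_mul 2).mul_const x).sin.const_mul
      (exp (-x ^ 2))).congr_deriv ?_
    simp only [id]
    ring

theorem integral_Ioi_exp_neg_sq_mul_sin :
    ∫ x in Ioi 0, exp (-x ^ 2) * sin (2 * b * x) = dawson b :=
  eq_dawson_of_hasDerivAt (f := fun b => ∫ x in Ioi 0, exp (-x ^ 2) * sin (2 * b * x))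
    hasDerivAt_integral_Ioi_exp_neg_sq_mul_sin (by simp) b

end GaussianSine

theorem integral_Ioi_exp_neg_mul_sq_mul_sin {c : ℝ} (hc : 0 < c) (β : ℝ) :
    ∫ x in Ioi 0, exp (-c * x ^ 2) * sin (β * x) = dawson (β / (2 * √c)) / √c := by
  have hsc : 0 < √c := sqrt_pos.mpr hc
  have hscale : ∀ x, exp (-c * x ^ 2) * sin (β * x)
      = exp (-(√c * x) ^ 2) * sin (2 * (β / (2 * √c)) * (√c * x)) := fun x => by
    rw [mul_pow, sq_sqrt hc.le]
    field_simp
  simp_rw [hscale]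
  rw [integral_comp_mul_left_Ioi (fun u => exp (-u ^ 2) * sin (2 * (β / (2 * √c)) * u)) 0 hsc,
    mul_zero, integral_Ioi_exp_neg_sq_mul_sin, smul_eq_mul, inv_mul_eq_div]

theorem Real.measurable_sign : Measurable Real.sign :=
  Measurable.ite (measurableSet_lt measurable_id measurable_const) measurable_const
    (Measurable.ite (measurableSet_lt measurable_const measurable_id) measurable_const
      measurable_const)

theorem integral_eq_integral_Ioi_add_comp_neg {E : Type*} [NormedAddCommGroup E]
    [NormedSpace ℝ E] {g : ℝ → E} (hg : Integrable g) :
    ∫ x, g x = ∫ x in Ioi 0, (g x + g (-x)) := by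
  rw [integral_add hg.integrableOn hg.comp_neg.integrableOn, integral_comp_neg_Ioi, neg_zero,
    add_comm, intervalIntegral.integral_Iic_add_Ioi hg.integrableOn hg.integrableOn]

theorem integral_ofReal_mul_exp_neg_I_of_odd {f : ℝ → ℝ} (hf : Integrable f)
    (hodd : ∀ x, f (-x) = -f x) (θ : ℝ) :
    ∫ x, (f x : ℂ) * Complex.exp ((-(θ * x) : ℝ) * Complex.I)
      = -2 * Complex.I * ((∫ x in Ioi 0, f x * sin (θ * x) : ℝ) : ℂ) := by
  have hint : Integrable fun x => (f x : ℂ) * Complex.exp ((-(θ * x) : ℝ) * Complex.I) :=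
    hf.ofReal.mul_bdd (by fun_prop) (c := 1) (ae_of_all _ fun x => by
      rw [Complex.norm_exp_ofReal_mul_I])
  have hsym : ∀ x, (f x : ℂ) * Complex.exp ((-(θ * x) : ℝ) * Complex.I)
      + (f (-x) : ℂ) * Complex.exp ((-(θ * -x) : ℝ) * Complex.I)
      = -2 * Complex.I * ((f x * sin (θ * x) : ℝ) : ℂ) := fun x => by
    simp only [hodd, mul_neg, neg_neg, Complex.exp_mul_I]
    push_cast
    simp only [Complex.cos_neg, Complex.sin_neg]
    ring
  rw [integral_eq_integral_Ioi_add_comp_neg hint]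
  simp only [hsym]
  rw [integral_const_mul, integral_complex_ofReal]

theorem stmt_19 (a : ℝ) (ha : 0 < a) (ω : ℝ) :
    (∫ x : ℝ, ((Real.sign x * Real.exp (-a * x ^ 2 / 2) : ℝ) : ℂ) *
        Complex.exp (((-(2 * π * ω * x) : ℝ) : ℂ) * Complex.I)
      = -2 * Complex.I * ((Real.sqrt (2 / a) : ℝ) : ℂ) *
          ((dawson (Real.sqrt 2 * π * ω / Real.sqrt a) : ℝ) : ℂ)) ∧
    (∫ x : ℝ, ((Real.sign x * Real.exp (-a * x ^ 2 / 2) : ℝ) : ℂ) *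
        Complex.exp (((-(2 * π * ω * x) : ℝ) : ℂ) * Complex.I)
      = -2 * Complex.I * ((Real.sqrt (2 / a) : ℝ) : ℂ) *
          ((Real.exp (-2 * π ^ 2 * ω ^ 2 / a) : ℝ) : ℂ) *
          (((∫ t in (0:ℝ)..(Real.sqrt 2 * π * ω / Real.sqrt a), Real.exp (t ^ 2)) : ℝ) : ℂ)) := by
  have hgauss : ∀ x, exp (-a * x ^ 2 / 2) = exp (-(a / 2) * x ^ 2) := fun x => by ring_nf
  have hint : Integrable fun x => sign x * exp (-a * x ^ 2 / 2) := by
    simp_rw [hgauss]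
    exact (integrable_exp_neg_mul_sq (half_pos ha)).bdd_mul measurable_sign.aestronglyMeasurable
      (c := 1) (ae_of_all _ fun x => by rcases sign_apply_eq x with h | h | h <;> simp [h])
  have hodd : ∀ x, sign (-x) * exp (-a * (-x) ^ 2 / 2) = -(sign x * exp (-a * x ^ 2 / 2)) :=
    fun x => by rw [sign_neg, neg_sq, neg_mul]
  have hsin : ∫ x in Ioi 0, sign x * exp (-a * x ^ 2 / 2) * sin (2 * π * ω * x)
      = √(2 / a) * dawson (√2 * π * ω / √a) := by
    rw [setIntegral_congr_fun measurableSet_Ioi fun x hx => by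
        rw [sign_of_pos (mem_Ioi.mp hx), one_mul, hgauss],
      integral_Ioi_exp_neg_mul_sq_mul_sin (half_pos ha), sqrt_div' _ two_pos.le, sqrt_div' _ ha.le,
      show 2 * π * ω / (2 * (√a / √2)) = √2 * π * ω / √a by field_simp]
    field_simp
  have hfourier := integral_ofReal_mul_exp_neg_I_of_odd hint hodd (2 * π * ω)
  rw [hsin] at hfourier
  refine ⟨by rw [hfourier]; push_cast; ring, ?_⟩
  have hz : -(√2 * π * ω / √a) ^ 2 = -2 * π ^ 2 * ω ^ 2 / a := by
    rw [div_pow, mul_pow, mul_pow, sq_sqrt two_pos.le, sq_sqrt ha.le]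
    ring
  rw [hfourier, dawson, hz]
  push_cast
  ring
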